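/- Let (T, T⁻) be the complete tower diagram of a finite permutation with its natural labelling, and let C be the cell of the virtual tower tableau T⁻ carrying the label 1. Then the row of the virtual tower diagram just below the cell C contains no cells. -/

import Mathlib

abbrev Cell : Type := ℕ × ℕ

/-- A tower diagram: a finite set of cells `(i, j)` with `i ≥ 1` that is downward
closed in each column. -/
def IsTowerDiagram (T : Finset Cell) : Prop :=
  ∀ c ∈ T, 1 ≤ c.1 ∧ ∀ j' ≤ c.2, (c.1, j') ∈ T

/-- The flight path of a cell of `T` (F1: direct flight, F2: zigzag flight). -/
inductive FlightPath (T : Finset Cell) : Cell → Finset Cell → Prop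
  | direct (i j : ℕ) (hmem : (i, j) ∈ T)
      (hnone : ∀ c ∈ T, ¬(c.1 < i ∧ c.1 + c.2 + 1 = i + j)) :
      FlightPath T (i, j) {(i, j)}
  | zigzag (i j i' j' : ℕ) (P : Finset Cell)
      (hmem : (i, j) ∈ T) (hmem' : (i', j') ∈ T)
      (hleft : i' < i) (hdiag : i' + j' + 1 = i + j)
      (hclosest : ∀ c ∈ T, c.1 < i → c.1 + c.2 + 1 = i + j → c.1 ≤ i')
      (hup : (i', j' + 1) ∈ T)
      (hrec : FlightPath T (i', j') P) :
      FlightPath T (i, j) (insert (i, j) (insert (i', j' + 1) P))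

/-- `FlightNumber T c f`: `c` has a flight path in `T` whose lexicographically
least cell has coordinate sum `f`. -/
def FlightNumber (T : Finset Cell) (c : Cell) (f : ℕ) : Prop :=
  ∃ P : Finset Cell, FlightPath T c P ∧
    ∃ m ∈ P, m.1 + m.2 = f ∧ ∀ p ∈ P, m.1 < p.1 ∨ (m.1 = p.1 ∧ m.2 ≤ p.2)

/-- A corner cell: it has a flight path and no cell on top of it. -/
def IsCornerCell (T : Finset Cell) (c : Cell) : Prop :=
  c ∈ T ∧ (c.1, c.2 + 1) ∉ T ∧ ∃ P, FlightPath T c P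

/-- `SlideAux T lo α T'` : sliding `α` into the subdiagram of `T` consisting of
the towers in columns `≥ lo` does not terminate and produces `T'`. -/
inductive SlideAux (T : Finset Cell) : ℕ → ℕ → Finset Cell → Prop
  | s1a (lo α : ℕ)
      (h1 : ∀ c ∈ T, lo ≤ c.1 → c.1 + c.2 + 1 ≠ α)
      (h2 : ∀ c ∈ T, lo ≤ c.1 → c.1 + c.2 ≠ α) :
      SlideAux T lo α (insert (α, 0) T)
  | s1c (lo α : ℕ) (T' : Finset Cell)
      (h1 : ∀ c ∈ T, lo ≤ c.1 → c.1 + c.2 + 1 ≠ α)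
      (h2 : (α, 0) ∈ T) (h2' : lo ≤ α) (h3 : (α, 1) ∈ T)
      (hrec : SlideAux T (α + 1) (α + 1) T') :
      SlideAux T lo α T'
  | s2a (lo α i j : ℕ)
      (hmem : (i, j) ∈ T) (hlo : lo ≤ i) (hdiag : i + j + 1 = α)
      (hmin : ∀ c ∈ T, lo ≤ c.1 → c.1 + c.2 + 1 = α → i ≤ c.1)
      (htop : (i, j + 1) ∉ T) :
      SlideAux T lo α (insert (i, j + 1) T)
  | s2c (lo α i j : ℕ) (T' : Finset Cell)
      (hmem : (i, j) ∈ T) (hlo : lo ≤ i) (hdiag : i + j + 1 = α)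
      (hmin : ∀ c ∈ T, lo ≤ c.1 → c.1 + c.2 + 1 = α → i ≤ c.1)
      (h1 : (i, j + 1) ∈ T) (h2 : (i, j + 2) ∈ T)
      (hrec : SlideAux T (i + 1) (α + 1) T') :
      SlideAux T lo α T'

/-- The slide `α ↘ T` does not terminate and produces `T'`. -/
def Slides (T : Finset Cell) (α : ℕ) (T' : Finset Cell) : Prop :=
  SlideAux T 0 α T'

/-- Successive sliding of the letters of a word into the empty diagram. -/
inductive SRDiagram : List ℕ → Finset Cell → Prop
  | nil : SRDiagram [] ∅
  | snoc {w : List ℕ} {T T' : Finset Cell} {a : ℕ}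
      (hw : SRDiagram w T) (ha : Slides T a T') :
      SRDiagram (w ++ [a]) T'

/-- The shape (underlying diagram) of a labelled tableau. -/
def shapeOf (R : Finset (Cell × ℕ)) : Finset Cell := R.image Prod.fst

/-- The recording tableau of the SR algorithm: the cell created at step `k` is
labelled `k`. -/
inductive SRRecord : List ℕ → Finset (Cell × ℕ) → Prop
  | nil : SRRecord [] ∅
  | snoc {w : List ℕ} {R : Finset (Cell × ℕ)} {a : ℕ} {c : Cell}
      (hw : SRRecord w R) (hc : c ∉ shapeOf R)
      (ha : Slides (shapeOf R) a (insert c (shapeOf R))) :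
      SRRecord (w ++ [a]) (insert (c, w.length + 1) R)

/-- The sliding tableau of the SR algorithm: each new cell `(i, j)` is labelled
`i + j`. -/
inductive SRSliding : List ℕ → Finset (Cell × ℕ) → Prop
  | nil : SRSliding [] ∅
  | snoc {w : List ℕ} {S : Finset (Cell × ℕ)} {a : ℕ} {c : Cell}
      (hw : SRSliding w S) (hc : c ∉ shapeOf S)
      (ha : Slides (shapeOf S) a (insert c (shapeOf S))) :
      SRSliding (w ++ [a]) (insert (c, c.1 + c.2) S)

/-- A tower tableau: a bijective labelling of a tower diagram by `{1, …, n}`. -/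
def IsTowerTableau (R : Finset (Cell × ℕ)) : Prop :=
  IsTowerDiagram (shapeOf R) ∧
  (∀ p ∈ R, ∀ q ∈ R, p.1 = q.1 → p = q) ∧
  R.image Prod.snd = Finset.Icc 1 R.card

/-- The subtableau of cells with labels `≤ a`. -/
def labelLE (R : Finset (Cell × ℕ)) (a : ℕ) : Finset (Cell × ℕ) :=
  R.filter fun p => p.2 ≤ a

/-- A standard tower tableau. -/
def IsStandardTowerTableau (R : Finset (Cell × ℕ)) : Prop :=
  IsTowerTableau R ∧
  ∀ p ∈ R, IsTowerDiagram (shapeOf (labelLE R p.2)) ∧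
    IsCornerCell (shapeOf (labelLE R p.2)) p.1

/-- `ReadsTo R w` : `w` is the reading word of the tableau `R`: the `k`-th letter
is the flight number, in `shape (R_{≤ k})`, of the cell labelled `k`. -/
def ReadsTo (R : Finset (Cell × ℕ)) (w : List ℕ) : Prop :=
  w.length = R.card ∧
  ∀ k : Fin w.length, ∀ c : Cell, (c, (k : ℕ) + 1) ∈ R →
    FlightNumber (shapeOf (labelLE R ((k : ℕ) + 1))) c (w.get k)

/-- A word of positive integers. -/
def IsPosWord (w : List ℕ) : Prop := ∀ a ∈ w, 1 ≤ a

/-- The permutation represented by a word: the product of the corresponding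
adjacent transpositions `sᵢ = (i, i+1)`. -/
def permOf (w : List ℕ) : Equiv.Perm ℕ :=
  (w.map fun i => Equiv.swap i (i + 1)).prod

/-- A reduced word: of minimal length among the positive words representing the
same permutation. -/
def IsReducedWord (w : List ℕ) : Prop :=
  IsPosWord w ∧
    ∀ w' : List ℕ, IsPosWord w' → permOf w' = permOf w → w.length ≤ w'.length

/-- A finite permutation: an element of the direct limit `⋃ₙ Sₙ`. -/
def FinitePerm (ω : Equiv.Perm ℕ) : Prop := ∃ w, IsPosWord w ∧ permOf w = ω

/-- The Coxeter length of a finite permutation. -/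
noncomputable def coxLength (ω : Equiv.Perm ℕ) : ℕ :=
  sInf {n | ∃ w : List ℕ, IsPosWord w ∧ permOf w = ω ∧ w.length = n}

/-- The Rothe diagram of a permutation (pairs written `(row, column)`). -/
def RotheDiagram (ω : Equiv.Perm ℕ) : Set (ℕ × ℕ) :=
  {p | 1 ≤ p.1 ∧ 1 ≤ p.2 ∧ p.2 < ω p.1 ∧ p.1 < ω.symm p.2}

/-- Interchanging rows `i` and `i + 1` of a diagram. -/
def rowSwap (i : ℕ) (D : Set (ℕ × ℕ)) : Set (ℕ × ℕ) :=
  {p | (Equiv.swap i (i + 1) p.1, p.2) ∈ D}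

/-- The natural labelling of a tower diagram: labels `1, …, n` go bottom to top
within each tower, taking the towers from right to left. -/
def naturalTableau (T : Finset Cell) : Finset (Cell × ℕ) :=
  T.image fun c => (c, (T.filter fun d => c.1 < d.1).card + c.2 + 1)

/-- A word in natural form: a concatenation of blocks, each a strictly
increasing run of consecutive integers, whose initial terms strictly decrease. -/
def IsNaturalForm (η : List ℕ) : Prop :=
  ∃ blocks : List (List ℕ),
    η = blocks.flatten ∧
    (∀ b ∈ blocks, ∃ s len : ℕ, 1 ≤ len ∧ b = List.range' s len) ∧
    List.Chain' (· > ·) (blocks.map fun b => b.headI)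

/-!
The natural labelling reads the towers from right to left, and each cell `(i, j)`
contributes its coordinate sum `i + j` to the reading word, since it is the leftmost cell of the
diagram read so far. So if the leftmost tower sits in column `L` and has height `h`, the reading
word ends with `L, L + 1, …, L + h - 1`, and all its earlier letters exceed `L`. Sliding the
reversed word, the letters `L + h - 1, …, L` first build the bottom row on the columns
`L, …, L + h - 1`; the cell labelled `1` of the virtual tableau is the first of them, in column
`L + h - 1`. Every later letter `α > L` with `α ≤ L + h` meets this row and is stacked on an
existing tower, so no tower is ever founded in column `L + h`.
-/

namespace SRDiagram

variable {w : List ℕ} {a : ℕ} {T : Finset Cell}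

theorem eq_empty_of_nil (h : SRDiagram [] T) : T = ∅ := by
  generalize hv : ([] : List ℕ) = v at h
  cases h with
  | nil => rfl
  | snoc => simp at hv

theorem exists_slides_of_append_singleton (h : SRDiagram (w ++ [a]) T) :
    ∃ T₀, SRDiagram w T₀ ∧ Slides T₀ a T := by
  generalize hv : w ++ [a] = v at h
  cases h with
  | nil => simp at hv
  | snoc hw ha =>
    obtain ⟨rfl, ⟨⟩⟩ := List.append_inj' hv rfl
    exact ⟨_, hw, ha⟩

theorem induction_append {u v : List ℕ} (P : Finset Cell → Prop) (h : SRDiagram (u ++ v) T)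
    (hu : ∀ D, SRDiagram u D → P D)
    (hv : ∀ a ∈ v, ∀ D D', P D → Slides D a D' → P D') : P T := by
  induction v using List.reverseRecOn generalizing T with
  | nil => exact hu T (by simpa using h)
  | append_singleton v a ih =>
    rw [← List.append_assoc] at h
    obtain ⟨T₀, hT₀, ha⟩ := exists_slides_of_append_singleton h
    exact hv a (by simp) T₀ T (ih hT₀ fun b hb => hv b (by simp [hb])) ha

end SRDiagram

theorem IsTowerDiagram.insert {T : Finset Cell} {c : Cell} (hT : IsTowerDiagram T)
    (hc : 1 ≤ c.1) (hbelow : ∀ j < c.2, (c.1, j) ∈ T) : IsTowerDiagram (insert c T) := by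
  intro d hd
  rcases Finset.mem_insert.1 hd with rfl | hd
  · refine ⟨hc, fun j hj => ?_⟩
    rcases hj.lt_or_eq with hj | rfl
    · exact Finset.mem_insert_of_mem (hbelow j hj)
    · exact Finset.mem_insert_self _ _
  · exact ⟨(hT d hd).1, fun j hj => Finset.mem_insert_of_mem ((hT d hd).2 j hj)⟩

theorem SlideAux.isTowerDiagram {T T' : Finset Cell} {lo α : ℕ} (h : SlideAux T lo α T')
    (hT : IsTowerDiagram T) (hα : 1 ≤ α) : IsTowerDiagram T' := by
  induction h with
  | s1a => exact hT.insert hα (by simp)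
  | s1c _ _ _ _ _ _ _ _ ih => exact ih (by omega)
  | s2a _ _ i j hmem =>
    exact hT.insert (hT _ hmem).1 fun j' hj' => (hT _ hmem).2 j' (by omega)
  | s2c _ _ _ _ _ _ _ _ _ _ _ _ ih => exact ih (by omega)

theorem SRDiagram.isTowerDiagram {w : List ℕ} {T : Finset Cell} (h : SRDiagram w T)
    (hw : IsPosWord w) : IsTowerDiagram T := by
  induction h with
  | nil => simp [IsTowerDiagram]
  | snoc _ ha ih =>
    exact SlideAux.isTowerDiagram ha (ih fun b hb => hw b (by simp [hb])) (hw _ (by simp))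

theorem IsTowerDiagram.exists_leftmost_column {T : Finset Cell} (hT : IsTowerDiagram T)
    (hne : T.Nonempty) : ∃ L, (L, 0) ∈ T ∧ ∀ c ∈ T, L ≤ c.1 := by
  obtain ⟨c, hc, hmin⟩ := T.exists_min_image Prod.fst hne
  exact ⟨c.1, (hT c hc).2 0 (Nat.zero_le _), hmin⟩

theorem FlightNumber.eq_of_forall_fst_le {S : Finset Cell} {c : Cell} {f : ℕ}
    (hf : FlightNumber S c f) (hleft : ∀ d ∈ S, c.1 ≤ d.1) : f = c.1 + c.2 := by
  obtain ⟨P, hP, m, hm, rfl, -⟩ := hf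
  cases hP with
  | direct => rw [Finset.mem_singleton.1 hm]
  | zigzag _ _ _ _ _ _ hmem' hleft' => exact absurd (hleft _ hmem') (by omega)

section NaturalLabel

variable {T : Finset Cell}

def naturalLabel (T : Finset Cell) (c : Cell) : ℕ :=
  (T.filter fun d => c.1 < d.1).card + c.2 + 1

theorem naturalTableau_eq_image (T : Finset Cell) :
    naturalTableau T = T.image fun c => (c, naturalLabel T c) := rfl

theorem card_naturalTableau (T : Finset Cell) : (naturalTableau T).card = T.card :=
  Finset.card_image_of_injective _ fun _ _ h => (Prod.ext_iff.1 h).1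

theorem naturalLabel_le_card_filter (hT : IsTowerDiagram T) {c : Cell} (hc : c ∈ T)
    (p : Cell → Prop) [DecidablePred p] (hp : ∀ d ∈ T, c.1 ≤ d.1 → p d) :
    naturalLabel T c ≤ (T.filter p).card := by
  have hdisj : Disjoint (T.filter fun d => c.1 < d.1) ({c.1} ×ˢ Finset.range (c.2 + 1)) := by
    rw [Finset.disjoint_left]
    intro d hd hd'
    simp only [Finset.mem_filter, Finset.mem_product, Finset.mem_singleton] at hd hd'
    omega
  have hsub :
      (T.filter fun d => c.1 < d.1) ∪ {c.1} ×ˢ Finset.range (c.2 + 1) ⊆ T.filter p := by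
    intro d hd
    simp only [Finset.mem_union, Finset.mem_filter, Finset.mem_product, Finset.mem_singleton,
      Finset.mem_range] at hd ⊢
    rcases hd with ⟨hdT, hlt⟩ | ⟨hd1, hd2⟩
    · exact ⟨hdT, hp d hdT hlt.le⟩
    · have hdT : d ∈ T := by
        have := (hT c hc).2 d.2 (by omega)
        rwa [← hd1] at this
      exact ⟨hdT, hp d hdT hd1.ge⟩
  calc naturalLabel T c
      = ((T.filter fun d => c.1 < d.1) ∪ {c.1} ×ˢ Finset.range (c.2 + 1)).card := by
        rw [Finset.card_union_of_disjoint hdisj, Finset.card_product]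
        simp [naturalLabel, add_assoc]
    _ ≤ (T.filter p).card := Finset.card_le_card hsub

theorem naturalLabel_lt_of_fst_lt (hT : IsTowerDiagram T) {c c' : Cell} (hc : c ∈ T)
    (h : c'.1 < c.1) : naturalLabel T c < naturalLabel T c' :=
  (naturalLabel_le_card_filter hT hc (fun d => c'.1 < d.1) fun _ _ hd => h.trans_le hd).trans_lt
    (by unfold naturalLabel; omega)

theorem naturalLabel_le_card (hT : IsTowerDiagram T) {c : Cell} (hc : c ∈ T) :
    naturalLabel T c ≤ T.card := by
  simpa using naturalLabel_le_card_filter hT hc (fun _ => True) fun _ _ _ => trivial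

theorem naturalLabel_injOn (hT : IsTowerDiagram T) : Set.InjOn (naturalLabel T) T := by
  intro c hc c' hc' h
  rcases lt_trichotomy c.1 c'.1 with hlt | heq | hgt
  · exact absurd h (naturalLabel_lt_of_fst_lt hT hc' hlt).ne'
  · unfold naturalLabel at h
    rw [heq] at h
    exact Prod.ext heq (by omega)
  · exact absurd h (naturalLabel_lt_of_fst_lt hT hc hgt).ne

theorem image_naturalLabel (hT : IsTowerDiagram T) :
    T.image (naturalLabel T) = Finset.Icc 1 T.card := by
  refine Finset.eq_of_subset_of_card_le (fun k hk => ?_) ?_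
  · obtain ⟨c, hc, rfl⟩ := Finset.mem_image.1 hk
    exact Finset.mem_Icc.2 ⟨by simp [naturalLabel], naturalLabel_le_card hT hc⟩
  · rw [Finset.card_image_of_injOn (naturalLabel_injOn hT)]
    simp

theorem ReadsTo.getElem_of_naturalTableau (hT : IsTowerDiagram T) {η : List ℕ}
    (hη : ReadsTo (naturalTableau T) η) {c : Cell} (hc : c ∈ T) {k : ℕ} (hk : k < η.length)
    (hl : naturalLabel T c = k + 1) : η[k] = c.1 + c.2 := by
  have hmem : (c, k + 1) ∈ naturalTableau T := hl ▸ Finset.mem_image_of_mem _ hc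
  refine (hη.2 ⟨k, hk⟩ c hmem).eq_of_forall_fst_le fun d hd => ?_
  simp only [shapeOf, labelLE, naturalTableau_eq_image, Finset.mem_image, Finset.mem_filter] at hd
  obtain ⟨_, ⟨⟨d, hdT, rfl⟩, hdl⟩, rfl⟩ := hd
  dsimp only at hdl ⊢
  by_contra hlt
  have := naturalLabel_lt_of_fst_lt hT hc (not_le.1 hlt)
  omega

theorem ReadsTo.eq_append_range'_of_naturalTableau (hT : IsTowerDiagram T)
    {η : List ℕ} (hη : ReadsTo (naturalTableau T) η) {L : ℕ} (hL0 : (L, 0) ∈ T)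
    (hL : ∀ c ∈ T, L ≤ c.1) :
    ∃ r h, η = r ++ List.range' L h ∧ 0 < h ∧ ∀ b ∈ r, L < b := by
  set m := (T.filter fun d => L < d.1).card
  have hlen : η.length = T.card := hη.1.trans (card_naturalTableau T)
  have hlabel : ∀ k < T.card, ∃ c ∈ T, naturalLabel T c = k + 1 := fun k hk =>
    Finset.mem_image.1 (image_naturalLabel hT ▸ Finset.mem_Icc.2 ⟨by omega, by omega⟩)
  have hleft : ∀ c ∈ T, c.1 = L → naturalLabel T c = m + c.2 + 1 := by
    rintro c - rfl
    rfl
  have hright : ∀ c ∈ T, c.1 ≠ L → naturalLabel T c ≤ m := fun c hc hne => by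
    have := naturalLabel_lt_of_fst_lt hT hc (c' := (L, 0)) ((hL c hc).lt_of_ne' hne)
    rw [hleft _ hL0 rfl] at this
    omega
  have hm : m < T.card := by
    have := naturalLabel_le_card hT hL0
    rw [hleft _ hL0 rfl] at this
    omega
  have hdrop : η.drop m = List.range' L (T.card - m) := by
    refine List.ext_getElem (by simp [hlen]) fun j hj _ => ?_
    obtain ⟨c, hc, hcl⟩ := hlabel (m + j) (by rw [List.length_drop] at hj; omega)
    have hcL : c.1 = L := by
      by_contra hne
      have := hright c hc hne
      omega
    have hcj : c.2 = j := by
      have := hleft c hc hcL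
      omega
    rw [List.getElem_drop, hη.getElem_of_naturalTableau hT hc _ hcl, List.getElem_range', hcL,
      hcj, one_mul]
  refine ⟨η.take m, T.card - m, by rw [← hdrop, List.take_append_drop], by omega,
    fun b hb => ?_⟩
  obtain ⟨k, hk, rfl⟩ := List.mem_iff_getElem.1 hb
  rw [List.length_take] at hk
  obtain ⟨c, hc, hcl⟩ := hlabel k (by omega)
  have hcL : c.1 ≠ L := fun hcL => by
    have := hleft c hc hcL
    omega
  rw [List.getElem_take, hη.getElem_of_naturalTableau hT hc _ hcl]
  have := hL c hc
  omega

end NaturalLabel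

theorem Slides.eq_insert_of_forall_lt_fst {D D' : Finset Cell} {a : ℕ} (h : Slides D a D')
    (hD : ∀ c ∈ D, a < c.1) : D' = insert (a, 0) D := by
  unfold Slides at h
  cases h with
  | s1a => rfl
  | s1c _ _ _ _ h2 => exact absurd (hD _ h2) (lt_irrefl a)
  | s2a _ _ _ _ hmem _ hdiag => exact absurd (hD _ hmem) (by omega)
  | s2c _ _ _ _ _ hmem _ hdiag => exact absurd (hD _ hmem) (by omega)

theorem SRDiagram.eq_of_range'_reverse {L h : ℕ} {D : Finset Cell}
    (hD : SRDiagram (List.range' L h).reverse D) : D = Finset.Ico L (L + h) ×ˢ {0} := by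
  induction h generalizing L D with
  | zero => simpa using hD.eq_empty_of_nil
  | succ h ih =>
    rw [List.range'_succ, List.reverse_cons] at hD
    obtain ⟨D₀, hD₀, hL⟩ := hD.exists_slides_of_append_singleton
    have hD₀row := ih hD₀
    have hright : ∀ c ∈ D₀, L < c.1 := fun c hc => by
      rw [hD₀row, Finset.mem_product, Finset.mem_Ico] at hc
      omega
    rw [hL.eq_insert_of_forall_lt_fst hright, hD₀row]
    ext ⟨x, y⟩
    simp only [Finset.mem_insert, Finset.mem_product, Finset.mem_Ico, Finset.mem_singleton,
      Prod.mk.injEq]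
    omega

def GapAfterRow (L g : ℕ) (D : Finset Cell) : Prop :=
  (∀ x, L ≤ x → x < g → (x, 0) ∈ D) ∧ ∀ c ∈ D, c.1 ≠ g

theorem GapAfterRow.insert {L g : ℕ} {D : Finset Cell} {c : Cell} (hD : GapAfterRow L g D)
    (hc : c.1 ≠ g) : GapAfterRow L g (insert c D) :=
  ⟨fun x hLx hxg => Finset.mem_insert_of_mem (hD.1 x hLx hxg), by
    rintro d hd
    rcases Finset.mem_insert.1 hd with rfl | hd
    exacts [hc, hD.2 d hd]⟩

theorem SlideAux.gapAfterRow {D D' : Finset Cell} {lo α L g : ℕ} (h : SlideAux D lo α D')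
    (hD : GapAfterRow L g D) (hLα : L < α) (hlo : α ≤ g → lo < α) : GapAfterRow L g D' := by
  -- a letter `α ≤ g` would meet the row cell `(α - 1, 0)` on its diagonal
  have hbeyond : ∀ lo α, (∀ c ∈ D, lo ≤ c.1 → c.1 + c.2 + 1 ≠ α) → L < α →
      (α ≤ g → lo < α) → g < α := fun lo α hmiss hLα hlo => by
    by_contra! hαg
    have := hlo hαg
    exact hmiss _ (hD.1 (α - 1) (by omega) (by omega)) (by dsimp only; omega)
      (by dsimp only; omega)
  induction h with
  | s1a lo α h1 => exact hD.insert (hbeyond lo α h1 hLα hlo).ne'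
  | s1c lo α _ h1 _ _ _ _ ih =>
    have := hbeyond lo α h1 hLα hlo
    exact ih (by omega) fun _ => by omega
  | s2a _ _ i j hmem => exact hD.insert (hD.2 (i, j) hmem)
  | s2c _ _ _ _ _ _ _ hdiag _ _ _ _ ih => exact ih (by omega) fun _ => by omega

theorem SRDiagram.gapAfterRow {L h : ℕ} {r : List ℕ} {D : Finset Cell}
    (hD : SRDiagram ((List.range' L h).reverse ++ r) D) (hr : ∀ b ∈ r, L < b) :
    GapAfterRow L (L + h) D := by
  refine hD.induction_append _ (fun D₀ hD₀ => ?_) fun a ha D D' hgap hslide =>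
    SlideAux.gapAfterRow hslide hgap (hr a ha) fun _ => (Nat.zero_le L).trans_lt (hr a ha)
  rw [hD₀.eq_of_range'_reverse]
  exact ⟨fun x hLx hxg => by simp [hLx, hxg], fun c hc => by
    rw [Finset.mem_product, Finset.mem_Ico] at hc
    omega⟩

theorem IsTowerTableau.shapeOf_labelLE_one {R : Finset (Cell × ℕ)} (hR : IsTowerTableau R)
    {C : Cell} (hC : (C, 1) ∈ R) : shapeOf (labelLE R 1) = {C} := by
  have hlabel : ∀ p ∈ R, 1 ≤ p.2 := fun p hp =>
    (Finset.mem_Icc.1 (hR.2.2 ▸ Finset.mem_image_of_mem Prod.snd hp)).1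
  have hinj : Set.InjOn Prod.snd (R : Set (Cell × ℕ)) :=
    Finset.card_image_iff.1 (by rw [hR.2.2, Nat.card_Icc, Nat.add_sub_cancel])
  have : labelLE R 1 = {(C, 1)} := by
    ext p
    simp only [labelLE, Finset.mem_filter, Finset.mem_singleton]
    refine ⟨fun ⟨hp, hp1⟩ => hinj hp hC (le_antisymm hp1 (hlabel p hp)), ?_⟩
    rintro rfl
    exact ⟨hC, le_rfl⟩
  simp [this, shapeOf]

theorem IsStandardTowerTableau.getElem_zero_of_readsTo {R : Finset (Cell × ℕ)}
    (hR : IsStandardTowerTableau R) {C : Cell} (hC : (C, 1) ∈ R) {v : List ℕ}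
    (hv : ReadsTo R v) (hv0 : 0 < v.length) : v[0] = C.1 := by
  have hshape := hR.1.shapeOf_labelLE_one hC
  have hC2 : C.2 = 0 := by
    have := ((hR.2 _ hC).1 C (by simp [hshape])).2 0 (Nat.zero_le _)
    simp only [hshape, Finset.mem_singleton] at this
    exact (congrArg Prod.snd this).symm
  have := (hv.2 ⟨0, hv0⟩ C hC).eq_of_forall_fst_le (by simp [hshape])
  simpa [hC2] using this

/-- Under the reflection along `y = -x`, a cell `(i, j)` of `Trev` lies in row `i` of the virtual
tower diagram. -/
theorem virtual_row_below_label_one_empty_general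
    (w : List ℕ) (hw : IsReducedWord w)
    (T : Finset Cell) (hT : SRDiagram w T)
    (η : List ℕ) (hη : ReadsTo (naturalTableau T) η)
    (Trev : Finset Cell) (hTrev : SRDiagram η.reverse Trev)
    (Rneg : Finset (Cell × ℕ)) (hstd : IsStandardTowerTableau Rneg)
    (hread : ReadsTo Rneg η.reverse)
    (C : Cell) (hC : (C, 1) ∈ Rneg) :
    ∀ c ∈ Trev, c.1 ≠ C.1 + 1 := by
  have hTD := hT.isTowerDiagram hw.1
  have hlen : 0 < η.reverse.length := hread.1 ▸ Finset.card_pos.2 ⟨_, hC⟩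
  have hTne : T.Nonempty := by
    rw [← Finset.card_pos, ← card_naturalTableau, ← hη.1]
    simpa using hlen
  obtain ⟨L, hL0, hL⟩ := hTD.exists_leftmost_column hTne
  obtain ⟨r, h, rfl, hh, hr⟩ := hη.eq_append_range'_of_naturalTableau hTD hL0 hL
  rw [List.reverse_append] at hTrev hread hlen
  have hgap := hTrev.gapAfterRow fun b hb => hr b (List.mem_reverse.1 hb)
  have hC1 : C.1 + 1 = L + h := by
    have := hstd.getElem_zero_of_readsTo hC hread hlen
    rw [List.getElem_append_left (by simpa using hh), List.getElem_reverse,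
      List.getElem_range'] at this
    simp only [List.length_range', tsub_zero, one_mul] at this
    omega
  exact hC1 ▸ hgap.2

/-- In the natural labelling of the complete tower diagram of
a finite permutation, the row of the virtual tower diagram just below the cell
labelled `1` is empty.  The virtual tower diagram is the reflection along
`y = -x` of the tower diagram `Trev` of the reversed word; under this
reflection a cell `(i, j)` of `Trev` sits in virtual row `i`, so the conclusion
says that `Trev` has no cell in column `C.1 + 1`. -/
theorem virtual_row_below_label_one_empty
    (w : List ℕ) (hw : IsReducedWord w)
    (T : Finset Cell) (hT : SRDiagram w T)
    (η : List ℕ) (hη : ReadsTo (naturalTableau T) η)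
    (Trev : Finset Cell) (hTrev : SRDiagram η.reverse Trev)
    (Rneg : Finset (Cell × ℕ)) (hstd : IsStandardTowerTableau Rneg)
    (hshape : shapeOf Rneg = Trev)
    (hread : ReadsTo Rneg η.reverse)
    (C : Cell) (hC : (C, 1) ∈ Rneg) :
    ∀ c ∈ Trev, c.1 ≠ C.1 + 1 :=
  virtual_row_below_label_one_empty_general w hw T hT η hη Trev hTrev Rneg hstd hread C hC
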